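/- Let K be a field of characteristic 0. If q ∈ K[x_1,...,x_n] is a coordinate polynomial (i.e., there is a K-algebra automorphism of K[x_1,...,x_n] sending q to x_1), and q is written q = x_1^k + u with the leading lex monomial of u divisible by a monomial involving all n variables with positive exponents and strictly greater than x_1^k, then we reach a contradiction; hence no coordinate polynomial has this form. -/

import Mathlib

/-!
The lexicographic order on `ℝⁿ` (after relabelling the coordinates by `σ`) is compatible with
addition and positive scaling, so its lower sets are convex and a lex-greatest
point of a set is an extreme point of its convex hull. The exponent `m` is lex-greatest in the
support of `x_1^k + u`, hence a vertex of its Newton polytope, and by Hadas's theorem it has a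
zero coordinate, contradicting `d ≤ m` with `d` positive.
-/

open MvPolynomial

section LexConvex

variable {𝕜 κ : Type*} [Ring 𝕜] [LinearOrder 𝕜] [IsStrictOrderedRing 𝕜] [LinearOrder κ]

theorem Pi.toLex_smul_lt_toLex_smul {c : 𝕜} (hc : 0 < c) {x y : κ → 𝕜}
    (h : toLex x < toLex y) : toLex (c • x) < toLex (c • y) := by
  obtain ⟨i, heq, hlt⟩ := h
  exact ⟨i, fun j hj => congrArg (c * ·) (heq j hj), mul_lt_mul_of_pos_left hlt hc⟩

theorem Pi.toLex_smul_le_toLex_smul {c : 𝕜} (hc : 0 < c) {x y : κ → 𝕜}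
    (h : toLex x ≤ toLex y) : toLex (c • x) ≤ toLex (c • y) := by
  rcases h.lt_or_eq with h | h
  · exact (toLex_smul_lt_toLex_smul hc h).le
  · rw [toLex_inj.1 h]

theorem convex_setOf_toLex_le (x : κ → 𝕜) : Convex 𝕜 {y | toLex y ≤ toLex x} := by
  refine convex_iff_forall_pos.2 fun y hy z hz a b ha hb hab => ?_
  calc toLex (a • y + b • z) = toLex (a • y) + toLex (b • z) := rfl
    _ ≤ toLex (a • x) + toLex (b • x) :=
      add_le_add (Pi.toLex_smul_le_toLex_smul ha hy) (Pi.toLex_smul_le_toLex_smul hb hz)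
    _ = toLex x := by rw [← toLex_add, ← add_smul, hab, one_smul]

theorem mem_extremePoints_of_forall_toLex_le {E : Type*} [AddCommGroup E] [Module 𝕜 E]
    (f : E →ₗ[𝕜] κ → 𝕜) (hf : Function.Injective f) {A : Set E} {x : E} (hx : x ∈ A)
    (hA : ∀ y ∈ A, toLex (f y) ≤ toLex (f x)) : x ∈ A.extremePoints 𝕜 := by
  refine ⟨hx, fun y hy z hz ⟨a, b, ha, hb, hab, hsum⟩ => ?_⟩
  by_contra hne
  have hlt : toLex (f y) < toLex (f x) := (hA y hy).lt_of_ne (hf.ne hne ∘ toLex_inj.1)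
  refine lt_irrefl (toLex (f x)) ?_
  calc toLex (f x) = toLex (a • f y) + toLex (b • f z) := by
        rw [← hsum, map_add, map_smul, map_smul, toLex_add]
    _ < toLex (a • f x) + toLex (b • f x) := add_lt_add_of_lt_of_le
        (Pi.toLex_smul_lt_toLex_smul ha hlt) (Pi.toLex_smul_le_toLex_smul hb (hA z hz))
    _ = toLex (f x) := by rw [← toLex_add, ← add_smul, hab, one_smul]

end LexConvex

theorem StrictMono.toLex_comp_le_toLex_comp {κ M N : Type*} [LinearOrder κ] [PartialOrder M]
    [Zero M] [PartialOrder N] {g : M → N} (hg : StrictMono g) {a b : κ →₀ M}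
    (h : toLex a ≤ toLex b) : toLex (g ∘ a) ≤ toLex (g ∘ b) := by
  rcases h.lt_or_eq with h | h
  · obtain ⟨i, heq, hlt⟩ := Finsupp.Lex.lt_iff.1 h
    exact le_of_lt ⟨i, fun j hj => congrArg g (heq j hj), hg hlt⟩
  · rw [toLex_inj.1 h]

theorem mem_extremePoints_convexHull_of_forall_toLex_le {ι κ : Type*} [LinearOrder κ]
    (σ : ι ≃ κ) {S : Set (ι →₀ ℕ)} {m : ι →₀ ℕ} (hm : m ∈ S)
    (hmax : ∀ e ∈ S, toLex (Finsupp.equivMapDomain σ e) ≤ toLex (Finsupp.equivMapDomain σ m)) :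
    (fun i => (m i : ℝ)) ∈ Set.extremePoints ℝ
      (convexHull ℝ ((fun (e : ι →₀ ℕ) (i : ι) => (e i : ℝ)) '' S)) := by
  let f := (LinearEquiv.funCongrLeft ℝ ℝ σ.symm).toLinearMap
  refine mem_extremePoints_of_forall_toLex_le f (LinearEquiv.injective _)
    (subset_convexHull ℝ _ ⟨m, hm, rfl⟩) fun y hy => ?_
  refine convexHull_min ?_ ((convex_setOf_toLex_le _).linear_preimage f) hy
  rintro _ ⟨e, he, rfl⟩
  exact Nat.strictMono_cast.toLex_comp_le_toLex_comp (hmax e he)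

theorem stmt_18_general (K : Type*) [Field K] (n : ℕ)
    (hHadas : ∀ r : MvPolynomial (Fin (n + 1)) K,
      (∃ α : MvPolynomial (Fin (n + 1)) K ≃ₐ[K] MvPolynomial (Fin (n + 1)) K, α r = X 0) →
      ∀ v ∈ Set.extremePoints ℝ
          (convexHull ℝ
            ((fun (e : Fin (n + 1) →₀ ℕ) (i : Fin (n + 1)) => (e i : ℝ)) '' r.support)),
        ∃ i, v i = 0)
    (u : MvPolynomial (Fin (n + 1)) K)
    (σ : Equiv.Perm (Fin (n + 1))) (m : Fin (n + 1) →₀ ℕ) (hm : m ∈ u.support)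
    (hlead : ∀ m' ∈ u.support,
      toLex (Finsupp.equivMapDomain σ m') ≤ toLex (Finsupp.equivMapDomain σ m))
    (hdiv : ∃ d : Fin (n + 1) →₀ ℕ, (∀ i, 0 < d i) ∧ ∀ i, d i ≤ m i)
    (k : ℕ)
    (hgt : toLex (Finsupp.equivMapDomain σ (Finsupp.single (0 : Fin (n + 1)) k)) <
      toLex (Finsupp.equivMapDomain σ m))
    (hcoord : ∃ α : MvPolynomial (Fin (n + 1)) K ≃ₐ[K] MvPolynomial (Fin (n + 1)) K,
      α (X 0 ^ k + u) = X 0) :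
    False := by
  have hne : Finsupp.single 0 k ≠ m := fun h => hgt.ne (by rw [h])
  have hmq : m ∈ (X 0 ^ k + u).support := by
    rwa [mem_support_iff, coeff_add, coeff_X_pow, if_neg hne, zero_add, ← mem_support_iff]
  have hmax : ∀ e ∈ (X 0 ^ k + u).support,
      toLex (Finsupp.equivMapDomain σ e) ≤ toLex (Finsupp.equivMapDomain σ m) := by
    intro e he
    rcases Finset.mem_union.1 (support_add he) with he | he
    · rw [support_X_pow, Finset.mem_singleton] at he
      exact he ▸ hgt.le
    · exact hlead e he
  obtain ⟨i, hi⟩ := hHadas _ hcoord _ (mem_extremePoints_convexHull_of_forall_toLex_le σ hmq hmax)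
  obtain ⟨d, hd_pos, hd_le⟩ := hdiv
  have hmi : m i = 0 := by exact_mod_cast hi
  exact (hd_pos i).ne' (Nat.le_zero.1 (hmi ▸ hd_le i))

/-- Assuming Hadas's theorem (every vertex of the Newton polytope of a coordinate polynomial
lies on a coordinate hyperplane): if `q = x_1^k + u` where the leading lex monomial of `u` is
divisible by a monomial involving all variables with positive exponents and is strictly
greater than `x_1^k`, then `q` cannot be a coordinate polynomial. -/
theorem stmt_18 (K : Type*) [Field K] [CharZero K] (n : ℕ)
    (hHadas : ∀ r : MvPolynomial (Fin (n + 1)) K,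
      (∃ α : MvPolynomial (Fin (n + 1)) K ≃ₐ[K] MvPolynomial (Fin (n + 1)) K, α r = X 0) →
      ∀ v ∈ Set.extremePoints ℝ
          (convexHull ℝ
            ((fun (e : Fin (n + 1) →₀ ℕ) (i : Fin (n + 1)) => (e i : ℝ)) '' r.support)),
        ∃ i, v i = 0)
    (u : MvPolynomial (Fin (n + 1)) K) (hu : u ≠ 0)
    (σ : Equiv.Perm (Fin (n + 1))) (m : Fin (n + 1) →₀ ℕ) (hm : m ∈ u.support)
    (hlead : ∀ m' ∈ u.support,
      toLex (Finsupp.equivMapDomain σ m') ≤ toLex (Finsupp.equivMapDomain σ m))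
    (hdiv : ∃ d : Fin (n + 1) →₀ ℕ, (∀ i, 0 < d i) ∧ ∀ i, d i ≤ m i)
    (k : ℕ) (hk : 1 ≤ k)
    (hgt : toLex (Finsupp.equivMapDomain σ (Finsupp.single (0 : Fin (n + 1)) k)) <
      toLex (Finsupp.equivMapDomain σ m))
    (hcoord : ∃ α : MvPolynomial (Fin (n + 1)) K ≃ₐ[K] MvPolynomial (Fin (n + 1)) K,
      α (X 0 ^ k + u) = X 0) :
    False :=
  stmt_18_general K n hHadas u σ m hm hlead hdiv k hgt hcoord
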